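/- Let P be a normal fuzzy logic program (an eFLP containing no strong negation ¬: all rule heads are atoms and all formulas mention only atoms). For all non-paraconsistent interpretations K, L : Π → V with positive lifts I_K^+, I_L^+ (where I_K^+(p) := (K(p), 0)), one has A_P(I_K^+, I_L^+)₁ = I^+_{A'_P(K,L)₁}, where A'_P is the Kettmann–Heyninck–Straß approximator; in particular the second components of A_P(I_K^+, I_L^+)₁ are identically 0. -/

import Mathlib

/-- Literals over a type `A` of atoms: atoms `p` and strongly negated atoms `¬p`. -/
inductive Lit (A : Type*) where
  | pos : A → Lit A
  | neg : A → Lit A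

/-- A signature of fuzzy connectives: a family `F` of connective names together with
arities and associated truth functions on the lattice `V` of truth values. -/
structure Sig (V : Type*) where
  F : Type*
  ar : F → ℕ
  tf : (f : F) → (Fin (ar f) → V) → V

/-- Every connective truth function of the signature is monotone in each argument. -/
def Sig.IsMonotone {V : Type*} [Preorder V] (S : Sig V) : Prop :=
  ∀ (f : S.F) (x y : Fin (S.ar f) → V), (∀ i, x i ≤ y i) → S.tf f x ≤ S.tf f y

/-- Extended fuzzy formulas: constants, literals, weakly negated literals,
and connectives applied to formulas. -/
inductive Fm (V : Type*) (S : Sig V) (A : Type*) where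
  | const : V → Fm V S A
  | lit : Lit A → Fm V S A
  | wneg : Lit A → Fm V S A
  | app : (f : S.F) → (Fin (S.ar f) → Fm V S A) → Fm V S A

/-- Paraconsistent fuzzy interpretations: each atom gets a pair (truth degree, falsity degree).
The order is the pointwise truth order `≤t`. -/
abbrev Interp (V : Type*) (A : Type*) := A → V × V

variable {V : Type*} {A : Type*} {S : Sig V}

/-- Evaluation of a literal under a paraconsistent interpretation. -/
def evalLit (I : Interp V A) : Lit A → V
  | .pos p => (I p).1
  | .neg p => (I p).2

/-- Evaluation of an extended fuzzy formula under a paraconsistent interpretation,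
where `snot` is the truth function of weak negation. -/
def evalFm (snot : V → V) (I : Interp V A) : Fm V S A → V
  | .const c => c
  | .lit l => evalLit I l
  | .wneg l => snot (evalLit I l)
  | .app f args => S.tf f (fun i => evalFm snot I (args i))

/-- Pair evaluation of an extended fuzzy formula: literals are evaluated in the lower
interpretation `L`, weakly negated literals in the upper interpretation `U`. -/
def pairEval (snot : V → V) (L U : Interp V A) : Fm V S A → V
  | .const c => c
  | .lit l => evalLit L l
  | .wneg l => snot (evalLit U l)
  | .app f args => S.tf f (fun i => pairEval snot L U (args i))

/-- An extended fuzzy logic program: a set of rules `ℓ ← B`. -/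
abbrev Prog (V : Type*) (S : Sig V) (A : Type*) := Set (Lit A × Fm V S A)

/-- `I` is a model of `P`: every rule body evaluates below its head. -/
def IsModel (snot : V → V) [Preorder V] (P : Prog V S A) (I : Interp V A) : Prop :=
  ∀ r ∈ P, evalFm snot I r.2 ≤ evalLit I r.1

variable [CompleteLattice V]

/-- The immediate consequence operator `T_P` of an extended fuzzy logic program. -/
def Tp (snot : V → V) (P : Prog V S A) (I : Interp V A) : Interp V A :=
  fun p => (sSup {v | ∃ B, (Lit.pos p, B) ∈ P ∧ v = evalFm snot I B},
            sSup {v | ∃ B, (Lit.neg p, B) ∈ P ∧ v = evalFm snot I B})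

/-- Lower half of the approximator `A_P`. -/
def apx1 (snot : V → V) (P : Prog V S A) (L U : Interp V A) : Interp V A :=
  fun p => (sSup {v | ∃ B, (Lit.pos p, B) ∈ P ∧ v = pairEval snot L U B},
            sSup {v | ∃ B, (Lit.neg p, B) ∈ P ∧ v = pairEval snot L U B})

/-- The approximator `A_P` on pairs of interpretations. -/
def apx (snot : V → V) (P : Prog V S A) (LU : Interp V A × Interp V A) :
    Interp V A × Interp V A :=
  (apx1 snot P LU.1 LU.2, apx1 snot P LU.2 LU.1)

/-- The precision order `≤p` on pairs of interpretations. -/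
def precLE (x y : Interp V A × Interp V A) : Prop := x.1 ≤ y.1 ∧ y.2 ≤ x.2

/-- A formula contains no weak negation. -/
def NoWneg : Fm V S A → Prop
  | .const _ => True
  | .lit _ => True
  | .wneg _ => False
  | .app _ args => ∀ i, NoWneg (args i)



/-- The atom of a literal. -/
def Lit.atom {A : Type*} : Lit A → A
  | .pos p => p
  | .neg p => p

/-- A formula contains no strong negation: it mentions only atoms, never `¬p`. -/
def NoNeg {V : Type*} {S : Sig V} {A : Type*} : Fm V S A → Prop
  | .const _ => True
  | .lit (.pos _) => True
  | .lit (.neg _) => False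
  | .wneg (.pos _) => True
  | .wneg (.neg _) => False
  | .app _ args => ∀ i, NoNeg (args i)

/-- Kettmann–Heyninck–Straß evaluation of a normal fuzzy formula under a pair of
non-paraconsistent interpretations: `⟦q⟧'_{K,L} = K(q)` and `⟦∼q⟧'_{K,L} = ∼̂(L(q))`. -/
def khsEval {V : Type*} {S : Sig V} {A : Type*} (snot : V → V) (K L : A → V) :
    Fm V S A → V
  | .const c => c
  | .lit l => K l.atom
  | .wneg l => snot (L l.atom)
  | .app f args => S.tf f (fun i => khsEval snot K L (args i))

/-- The Kettmann–Heyninck–Straß approximator (lower half) of a normal fuzzy logic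
program on pairs of non-paraconsistent interpretations. -/
def khsA1 {V : Type*} [CompleteLattice V] {S : Sig V} {A : Type*}
    (snot : V → V) (P : Prog V S A) (K L : A → V) : A → V :=
  fun p => sSup {v | ∃ B, (Lit.pos p, B) ∈ P ∧ v = khsEval snot K L B}

/-- The positive lift of a non-paraconsistent interpretation: `I_K^+(p) := (K(p), 0)`. -/
def posLift {V : Type*} [CompleteLattice V] {A : Type*} (K : A → V) : Interp V A :=
  fun p => (K p, ⊥)

theorem pairEval_eq_khsEval {V A : Type*} {S : Sig V} (snot : V → V) (L U : Interp V A) :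
    ∀ {B : Fm V S A}, NoNeg B →
      pairEval snot L U B = khsEval snot (fun p => (L p).1) (fun p => (U p).1) B
  -- the `¬p` cases are omitted: there `NoNeg B` reduces to `False`
  | .const _, _ => rfl
  | .lit (.pos _), _ => rfl
  | .wneg (.pos _), _ => rfl
  | .app f _, hB => congrArg (S.tf f) (funext fun i => pairEval_eq_khsEval snot L U (hB i))

theorem apx1_fst_eq_khsA1 (snot : V → V) {P : Prog V S A} (hP : ∀ r ∈ P, NoNeg r.2)
    (L U : Interp V A) (p : A) :
    (apx1 snot P L U p).1 = khsA1 snot P (fun q => (L q).1) (fun q => (U q).1) p := by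
  refine congrArg sSup (Set.ext fun v => exists_congr fun B => and_congr_right fun hB => ?_)
  rw [pairEval_eq_khsEval snot L U (hP _ hB)]

theorem apx1_snd_eq_bot (snot : V → V) {P : Prog V S A} (hP : ∀ r ∈ P, ∃ p, r.1 = Lit.pos p)
    (L U : Interp V A) (p : A) : (apx1 snot P L U p).2 = ⊥ := by
  refine sSup_eq_bot.2 fun v ⟨B, hB, _⟩ => absurd (hP _ hB) ?_
  rintro ⟨q, hq⟩
  cases hq

theorem apx1_posLift_eq_khs_general
    {V A : Type*} [CompleteLattice V] {S : Sig V}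
    (snot : V → V)
    (P : Prog V S A)
    (hnormal : ∀ r ∈ P, (∃ p, r.1 = Lit.pos p) ∧ NoNeg r.2)
    (K L : A → V) :
    apx1 snot P (posLift K) (posLift L) = posLift (khsA1 snot P K L) ∧
    ∀ p, (apx1 snot P (posLift K) (posLift L) p).2 = ⊥ := by
  have hheads : ∀ r ∈ P, ∃ p, r.1 = Lit.pos p := fun r hr => (hnormal r hr).1
  have hbodies : ∀ r ∈ P, NoNeg r.2 := fun r hr => (hnormal r hr).2
  exact ⟨funext fun p => Prod.ext (apx1_fst_eq_khsA1 snot hbodies _ _ p)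
      (apx1_snd_eq_bot snot hheads _ _ p), apx1_snd_eq_bot snot hheads _ _⟩

/-- For a normal fuzzy logic program `P` (no strong negation:
all heads are atoms, all bodies mention only atoms), the approximator `A_P` restricted
to positive lifts coincides with the Kettmann–Heyninck–Straß approximator:
`A_P(I_K^+, I_L^+)₁ = I^+_{A'_P(K,L)₁}`; in particular the second components of
`A_P(I_K^+, I_L^+)₁` are identically 0. -/
theorem apx1_posLift_eq_khs
    {V A : Type*} [CompleteLattice V] {S : Sig V}
    (snot : V → V) (hanti : Antitone snot) (hs0 : snot ⊥ = ⊤) (hs1 : snot ⊤ = ⊥)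
    (hS : S.IsMonotone)
    (P : Prog V S A) (hfin : P.Finite)
    (hnormal : ∀ r ∈ P, (∃ p, r.1 = Lit.pos p) ∧ NoNeg r.2)
    (K L : A → V) :
    apx1 snot P (posLift K) (posLift L) = posLift (khsA1 snot P K L) ∧
    ∀ p, (apx1 snot P (posLift K) (posLift L) p).2 = ⊥ :=
  apx1_posLift_eq_khs_general snot P hnormal K L
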